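/- Let F be an algebraically closed field, let α₁, α₈, β₁, β₈ ∈ F, and let A₁ = (α₁, 0; 0, α₈), A₂ = (β₁, 0; 0, β₈) as split octonions. For fixed integers k₁, k₂ ≥ 2, the map (X, Y) ↦ A₁X^{k₁} + A₂Y^{k₂} is surjective on O(F) if and only if α₁β₈ ≠ 0 or α₈β₁ ≠ 0. -/

import Mathlib

/-- Zorn vector matrices: the split octonion algebra over `F`. -/
structure Oct (F : Type*) where
  a : F              -- upper-left scalar η
  b : Fin 3 → F      -- upper-right vector x
  c : Fin 3 → F      -- lower-left vector y
  d : F              -- lower-right scalar ζ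

namespace Oct

variable {F : Type*} [Field F]

/-- standard bilinear form on F^3 -/
def dot (x y : Fin 3 → F) : F := x 0 * y 0 + x 1 * y 1 + x 2 * y 2

/-- cross product on F^3, satisfying ⟨x ∧ y, z⟩ = det(x,y,z) -/
def cross (x y : Fin 3 → F) : Fin 3 → F :=
  ![x 1 * y 2 - x 2 * y 1, x 2 * y 0 - x 0 * y 2, x 0 * y 1 - x 1 * y 0]

instance : Add (Oct F) :=
  ⟨fun A B => ⟨A.a + B.a, A.b + B.b, A.c + B.c, A.d + B.d⟩⟩

instance : Mul (Oct F) :=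
  ⟨fun A B =>
    ⟨A.a * B.a + dot A.b B.c,
     A.a • B.b + B.d • A.b + cross A.c B.c,
     A.d • B.c + B.a • A.c + cross A.b B.b,
     A.d * B.d + dot A.c B.b⟩⟩

instance : SMul F (Oct F) :=
  ⟨fun t A => ⟨t * A.a, t • A.b, t • A.c, t * A.d⟩⟩

instance : One (Oct F) := ⟨⟨1, 0, 0, 1⟩⟩

/-- powers, via A^{n+1} = A · A^n (well-defined by power-associativity) -/
def pow (A : Oct F) : ℕ → Oct F
  | 0 => 1
  | n + 1 => A * pow A n

/-- octonion conjugation -/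
def conj (A : Oct F) : Oct F := ⟨A.d, -A.b, -A.c, A.a⟩

/-- the norm form -/
def norm (A : Oct F) : F := A.a * A.d - dot A.b A.c

end Oct

/-!
Every `Y` satisfies `Y * Y = (Y.a + Y.d) • Y - norm Y • 1`, so `Y ^ k` is a combination of `1`
and `Y`; hence `⟨0, x, 0, 0⟩` with `x ≠ 0` is not a `k`-th power when `k ≥ 2`. If
`α₁ β₈ = α₈ β₁ = 0`, then either a diagonal entry of every `A₁ X ^ k₁ + A₂ Y ^ k₂` vanishes, or
one summand is zero and the other has an invertible coefficient, so `⟨0, e₁, 0, 0⟩` is missed.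

Conversely, if `α₁ β₈ ≠ 0` take `X = ⟨s₁, x, 0, u₁⟩` and `Y = ⟨s₂, 0, y, u₂⟩`. Their powers are
again triangular, with off-diagonal coefficient the geometric sum
`(u ^ k - s ^ k) / (u - s)`. Over an algebraically closed field the diagonals of `X ^ k₁`,
`Y ^ k₂` can be prescribed freely, so they can be chosen to solve the diagonal equations with
`s₁ ^ k₁ ≠ u₁ ^ k₁` and `s₂ ^ k₂ ≠ u₂ ^ k₂`; then `x` and `y` are determined by scaling. The case
`α₈ β₁ ≠ 0` is its image under the automorphism `swap` exchanging the two corners.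
-/

namespace Oct

@[ext]
lemma ext {F : Type*} {A B : Oct F} (ha : A.a = B.a) (hb : A.b = B.b) (hc : A.c = B.c)
    (hd : A.d = B.d) : A = B := by
  cases A; cases B; simp_all

def swap {F : Type*} (A : Oct F) : Oct F := ⟨A.d, A.c, A.b, A.a⟩

lemma swap_swap {F : Type*} (A : Oct F) : swap (swap A) = A := rfl

variable {F : Type*} [Field F]

section Components

variable (A B : Oct F) (t : F)

@[simp] lemma add_a : (A + B).a = A.a + B.a := rfl
@[simp] lemma add_b : (A + B).b = A.b + B.b := rfl
@[simp] lemma add_c : (A + B).c = A.c + B.c := rfl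
@[simp] lemma add_d : (A + B).d = A.d + B.d := rfl
@[simp] lemma mul_a : (A * B).a = A.a * B.a + dot A.b B.c := rfl
@[simp] lemma mul_b : (A * B).b = A.a • B.b + B.d • A.b + cross A.c B.c := rfl
@[simp] lemma mul_c : (A * B).c = A.d • B.c + B.a • A.c + cross A.b B.b := rfl
@[simp] lemma mul_d : (A * B).d = A.d * B.d + dot A.c B.b := rfl
@[simp] lemma smul_a : (t • A).a = t * A.a := rfl
@[simp] lemma smul_b : (t • A).b = t • A.b := rfl
@[simp] lemma smul_c : (t • A).c = t • A.c := rfl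
@[simp] lemma smul_d : (t • A).d = t * A.d := rfl
@[simp] lemma one_a : (1 : Oct F).a = 1 := rfl
@[simp] lemma one_b : (1 : Oct F).b = 0 := rfl
@[simp] lemma one_c : (1 : Oct F).c = 0 := rfl
@[simp] lemma one_d : (1 : Oct F).d = 1 := rfl

end Components

section Vectors

variable (x y : Fin 3 → F) (t : F)

@[simp] lemma dot_zero_left : dot 0 y = 0 := by simp [dot]
@[simp] lemma dot_zero_right : dot x 0 = 0 := by simp [dot]
@[simp] lemma dot_smul_left : dot (t • x) y = t * dot x y := by simp only [dot]; simp; ring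
@[simp] lemma dot_smul_right : dot x (t • y) = t * dot x y := by simp only [dot]; simp; ring
lemma dot_comm : dot x y = dot y x := by simp only [dot]; ring

@[simp] lemma cross_zero_left : cross 0 y = 0 := by
  ext i; fin_cases i <;> simp [cross]
@[simp] lemma cross_smul_self : cross x (t • x) = 0 := by
  ext i; fin_cases i <;> simp [cross] <;> ring

end Vectors

lemma pow_eq_smul_add_smul_one (Y : Oct F) (n : ℕ) : ∃ p q : F, pow Y n = p • Y + q • 1 := by
  induction n with
  | zero => exact ⟨0, 1, by ext <;> simp [pow]⟩
  | succ n ih =>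
    obtain ⟨p, q, h⟩ := ih
    -- `Y * Y = (Y.a + Y.d) • Y - norm Y • 1`
    refine ⟨p * (Y.a + Y.d) + q, -p * norm Y, ?_⟩
    ext <;> simp [pow, h, norm, dot_comm Y.c] <;> ring

lemma swap_add (A B : Oct F) : swap (A + B) = swap A + swap B := rfl

lemma swap_mul (A B : Oct F) : swap (A * B) = swap A * swap B := rfl

lemma swap_pow (A : Oct F) (n : ℕ) : swap (pow A n) = pow (swap A) n := by
  induction n with
  | zero => rfl
  | succ n ih => rw [pow, pow, swap_mul, ih]

open Finset in
lemma pow_upper (s u : F) (x : Fin 3 → F) (n : ℕ) :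
    pow ⟨s, x, 0, u⟩ n = ⟨s ^ n, (∑ i ∈ range n, u ^ i * s ^ (n - 1 - i)) • x, 0, u ^ n⟩ := by
  induction n with
  | zero => ext <;> simp [pow]
  | succ n ih =>
    ext <;> simp [pow, ih, geom_sum₂_succ_eq, pow_succ, smul_smul] <;> ring

open Finset in
lemma pow_lower (s u : F) (y : Fin 3 → F) (n : ℕ) :
    pow ⟨s, 0, y, u⟩ n = ⟨s ^ n, 0, (∑ i ∈ range n, s ^ i * u ^ (n - 1 - i)) • y, u ^ n⟩ := by
  rw [← swap_swap ⟨s, 0, y, u⟩, ← swap_pow]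
  exact congrArg swap (pow_upper u s y n)

lemma eq_zero_of_pow_eq {k : ℕ} (hk : 2 ≤ k) {Y : Oct F} {x : Fin 3 → F}
    (h : pow Y k = ⟨0, x, 0, 0⟩) : x = 0 := by
  obtain ⟨p, q, hpq⟩ := pow_eq_smul_add_smul_one Y k
  rw [h] at hpq
  by_contra hx
  have hp : p ≠ 0 := by
    rintro rfl
    exact hx (by simpa using congrArg b hpq)
  have hc : Y.c = 0 := by simpa [hp, eq_comm] using congrArg c hpq
  have ha : 0 = p * Y.a + q := by simpa using congrArg a hpq
  have hd : 0 = p * Y.d + q := by simpa using congrArg d hpq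
  have hda : Y.d = Y.a := mul_left_cancel₀ hp (by linear_combination ha - hd)
  obtain ⟨y, v, c, d⟩ := Y
  simp only at hc hda
  subst c d
  rw [pow_upper] at h
  have hy : y = 0 := pow_eq_zero_iff (by omega) |>.1 (congrArg a h)
  subst hy
  -- `k ≥ 2` enters here: the geometric sum at `0, 0` is `k * 0 ^ (k - 1) = 0`
  have hx0 := congrArg b h
  simp [geom_sum₂_self, zero_pow (by omega : k - 1 ≠ 0)] at hx0
  exact hx hx0.symm

lemma mk_mul_pow_ne {α β : F} (hα : α ≠ 0) (hβ : β ≠ 0) {k : ℕ} (hk : 2 ≤ k) (Y : Oct F) :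
    (⟨α, 0, 0, β⟩ : Oct F) * pow Y k ≠ ⟨0, ![1, 0, 0], 0, 0⟩ := by
  intro h
  have hY : pow Y k = ⟨0, α⁻¹ • ![1, 0, 0], 0, 0⟩ := by
    have ha := congrArg a h
    have hb := congrArg b h
    have hc := congrArg c h
    have hd := congrArg d h
    simp only [mul_a, mul_b, mul_c, mul_d, dot_zero_left, cross_zero_left] at ha hb hc hd
    ext <;> simp_all [← hb]
  exact hα (by simpa using eq_zero_of_pow_eq hk hY)

lemma mul_ne_zero_or_of_surjective {α₁ α₈ β₁ β₈ : F} {k₁ k₂ : ℕ} (hk₁ : 2 ≤ k₁) (hk₂ : 2 ≤ k₂)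
    (hsurj : ∀ A : Oct F, ∃ X Y : Oct F,
      A = (⟨α₁, 0, 0, α₈⟩ : Oct F) * pow X k₁ + (⟨β₁, 0, 0, β₈⟩ : Oct F) * pow Y k₂) :
    α₁ * β₈ ≠ 0 ∨ α₈ * β₁ ≠ 0 := by
  by_contra! h
  obtain ⟨h₁₈, h₈₁⟩ := h
  have h₁ : α₁ ≠ 0 ∨ β₁ ≠ 0 := by
    obtain ⟨X, Y, hXY⟩ := hsurj ⟨1, 0, 0, 0⟩
    by_contra! h0
    simpa [h0] using congrArg a hXY
  have h₈ : α₈ ≠ 0 ∨ β₈ ≠ 0 := by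
    obtain ⟨X, Y, hXY⟩ := hsurj ⟨0, 0, 0, 1⟩
    by_contra! h0
    simpa [h0] using congrArg d hXY
  -- one of the two summands vanishes identically, the other has an invertible coefficient
  obtain ⟨X, Y, hXY⟩ := hsurj ⟨0, ![1, 0, 0], 0, 0⟩
  rcases h₁ with hα₁ | hβ₁
  · have hβ₈ : β₈ = 0 := (mul_eq_zero.1 h₁₈).resolve_left hα₁
    have hα₈ : α₈ ≠ 0 := h₈.resolve_right (not_not.2 hβ₈)
    have hβ₁ : β₁ = 0 := (mul_eq_zero.1 h₈₁).resolve_left hα₈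
    refine mk_mul_pow_ne hα₁ hα₈ hk₁ X ?_
    rw [hXY, hβ₁, hβ₈]
    ext <;> simp
  · have hα₈ : α₈ = 0 := (mul_eq_zero.1 h₈₁).resolve_right hβ₁
    have hβ₈ : β₈ ≠ 0 := h₈.resolve_left (not_not.2 hα₈)
    have hα₁ : α₁ = 0 := (mul_eq_zero.1 h₁₈).resolve_right hβ₈
    refine mk_mul_pow_ne hβ₁ hβ₈ hk₂ Y ?_
    rw [hXY, hα₁, hα₈]
    ext <;> simp

lemma exists_solutions_ne [Infinite F] {p q r s : F} (hp : p ≠ 0) (hs : s ≠ 0) (A B : F) :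
    ∃ a δ w v : F, p * a + q * w = A ∧ r * δ + s * v = B ∧ a ≠ δ ∧ w ≠ v := by
  classical
  obtain ⟨δ, hδ⟩ :=
    Infinite.exists_notMem_finset ({(A - q * (B / s + 1)) / p, -s / r} : Finset F)
  simp only [Finset.mem_insert, Finset.mem_singleton, not_or] at hδ
  refine ⟨(A - q * (B / s + 1)) / p, δ, B / s + 1, (B - r * δ) / s, by field_simp; ring,
    by field_simp; ring, Ne.symm hδ.1, fun hwv => ?_⟩
  have hrδ : r * δ = -s := by
    field_simp at hwv
    linear_combination hwv
  rcases eq_or_ne r 0 with hr | hr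
  · exact hs (by simpa [hr] using hrδ.symm)
  · exact hδ.2 (by field_simp; linear_combination hrδ)

open Finset in
lemma exists_pow_eq_geom_sum₂_ne_zero [IsAlgClosed F] {k : ℕ} (hk : k ≠ 0) {a b : F}
    (hab : a ≠ b) :
    ∃ x y : F, x ^ k = a ∧ y ^ k = b ∧ ∑ i ∈ range k, x ^ i * y ^ (k - 1 - i) ≠ 0 := by
  obtain ⟨x, hx⟩ := IsAlgClosed.exists_pow_nat_eq a (Nat.pos_of_ne_zero hk)
  obtain ⟨y, hy⟩ := IsAlgClosed.exists_pow_nat_eq b (Nat.pos_of_ne_zero hk)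
  refine ⟨x, y, hx, hy, fun h0 => hab ?_⟩
  have := geom_sum₂_mul x y k
  rw [h0, zero_mul, hx, hy] at this
  exact sub_eq_zero.1 this.symm

lemma exists_eq_mk_mul_pow_add_mk_mul_pow [IsAlgClosed F] {α₁ α₈ β₁ β₈ : F} (hα₁ : α₁ ≠ 0)
    (hβ₈ : β₈ ≠ 0) {k₁ k₂ : ℕ} (hk₁ : k₁ ≠ 0) (hk₂ : k₂ ≠ 0) (A : Oct F) :
    ∃ X Y : Oct F,
      A = (⟨α₁, 0, 0, α₈⟩ : Oct F) * pow X k₁ + (⟨β₁, 0, 0, β₈⟩ : Oct F) * pow Y k₂ := by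
  obtain ⟨a, δ, w, v, ha, hd, haδ, hwv⟩ :=
    exists_solutions_ne (q := β₁) (r := α₈) hα₁ hβ₈ A.a A.d
  obtain ⟨u₁, s₁, rfl, rfl, hX⟩ := exists_pow_eq_geom_sum₂_ne_zero hk₁ (Ne.symm haδ)
  obtain ⟨s₂, u₂, rfl, rfl, hY⟩ := exists_pow_eq_geom_sum₂_ne_zero hk₂ hwv
  refine ⟨⟨s₁, (α₁ * ∑ i ∈ Finset.range k₁, u₁ ^ i * s₁ ^ (k₁ - 1 - i))⁻¹ • A.b, 0, u₁⟩,
    ⟨s₂, 0, (β₈ * ∑ i ∈ Finset.range k₂, s₂ ^ i * u₂ ^ (k₂ - 1 - i))⁻¹ • A.c, u₂⟩, ?_⟩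
  rw [pow_upper, pow_lower]
  ext <;> simp [ha, hd, smul_smul, hα₁, hβ₈, hX, hY]

end Oct

open Oct
theorem stmt_7 {F : Type*} [Field F] [IsAlgClosed F] (α₁ α₈ β₁ β₈ : F)
    (k₁ k₂ : ℕ) (hk₁ : 2 ≤ k₁) (hk₂ : 2 ≤ k₂) :
    (∀ A : Oct F, ∃ X Y : Oct F,
        A = (⟨α₁, 0, 0, α₈⟩ : Oct F) * pow X k₁ + (⟨β₁, 0, 0, β₈⟩ : Oct F) * pow Y k₂)
      ↔ (α₁ * β₈ ≠ 0 ∨ α₈ * β₁ ≠ 0) := by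
  refine ⟨mul_ne_zero_or_of_surjective hk₁ hk₂, ?_⟩
  rintro (h | h) A
  · exact exists_eq_mk_mul_pow_add_mk_mul_pow (left_ne_zero_of_mul h) (right_ne_zero_of_mul h)
      (by omega) (by omega) A
  · obtain ⟨X, Y, hXY⟩ := exists_eq_mk_mul_pow_add_mk_mul_pow (α₈ := α₁) (β₁ := β₈)
      (left_ne_zero_of_mul h) (right_ne_zero_of_mul h) (by omega : k₁ ≠ 0) (by omega : k₂ ≠ 0)
      (swap A)
    refine ⟨swap X, swap Y, ?_⟩
    rw [← swap_swap A, hXY, swap_add, swap_mul, swap_mul, swap_pow, swap_pow]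
    rfl
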